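/- Fix t ∈ ℚ with t > 0, a weight vector λ = (r_0, …, r_{n+1}) with r_0 ≥ ⋯ ≥ r_{n+1}, and an index i. Let V^⊕ = {a : degree-d exponent vector with ⟨a, λ⟩ + t·r_i ≥ 0} and B^⊕ = {j ≤ i}. Define Ann = {(a, j) ∈ V^⊕ × B^⊕ : ⟨a, λ⟩ + t·r_j = 0}, V^0 = {a ∈ V^⊕ : ∃ j' ∈ B^⊕ with ⟨a, λ⟩ + t·r_{j'} = 0}, and B^0 = {j ∈ B^⊕ : r_j ≤ r_{j''} for all j'' ∈ B^⊕}. If Ann is nonempty, then Ann = V^0 × B^0. -/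
import Mathlib


/-- The annihilator of λ and xᵢ at t > 0, if nonempty, is the cartesian product
V⁰ × B⁰ (Proposition 5.2). -/
theorem annihilator_is_product (n d : ℕ) (t : ℚ) (ht : 0 < t)
    (r : Fin (n + 2) → ℤ) (hr : ∀ j k : Fin (n + 2), j ≤ k → r k ≤ r j)
    (i : Fin (n + 2))
    (hAnn : ∃ (a : Fin (n + 2) → ℕ) (j : Fin (n + 2)),
      ((∑ k, a k = d) ∧ 0 ≤ (∑ k, (a k : ℚ) * (r k : ℚ)) + t * (r i : ℚ)) ∧
      j ≤ i ∧ (∑ k, (a k : ℚ) * (r k : ℚ)) + t * (r j : ℚ) = 0) :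
    ∀ (a : Fin (n + 2) → ℕ) (j : Fin (n + 2)),
      (((∑ k, a k = d) ∧ 0 ≤ (∑ k, (a k : ℚ) * (r k : ℚ)) + t * (r i : ℚ)) ∧
        j ≤ i ∧ (∑ k, (a k : ℚ) * (r k : ℚ)) + t * (r j : ℚ) = 0)
      ↔
      ((((∑ k, a k = d) ∧ 0 ≤ (∑ k, (a k : ℚ) * (r k : ℚ)) + t * (r i : ℚ)) ∧
          ∃ j' : Fin (n + 2), j' ≤ i ∧
            (∑ k, (a k : ℚ) * (r k : ℚ)) + t * (r j' : ℚ) = 0) ∧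
        (j ≤ i ∧ ∀ j'' : Fin (n + 2), j'' ≤ i → r j ≤ r j'')) := by
  intro a j
  set S : ℚ := ∑ k, (a k : ℚ) * (r k : ℚ) with hS
  -- key: if j' ≤ i annihilates a, then r j' = r i
  have key : ∀ j' : Fin (n + 2), j' ≤ i → 0 ≤ S + t * (r i : ℚ) →
      S + t * (r j' : ℚ) = 0 → r j' = r i := by
    intro j' hji hpos hzero
    have h1 : r i ≤ r j' := hr j' i hji
    have h2 : (r j' : ℚ) ≤ (r i : ℚ) := by
      have : t * (r j' : ℚ) ≤ t * (r i : ℚ) := by linarith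
      exact le_of_mul_le_mul_left this ht
    have h2' : r j' ≤ r i := by exact_mod_cast h2
    omega
  constructor
  · rintro ⟨⟨hd, hpos⟩, hji, hzero⟩
    have hji' := key j hji hpos hzero
    refine ⟨⟨⟨hd, hpos⟩, j, hji, hzero⟩, hji, ?_⟩
    intro j'' hj''
    have := hr j'' i hj''
    omega
  · rintro ⟨⟨⟨hd, hpos⟩, j', hj'i, hzero⟩, hji, hmin⟩
    have hj'eq := key j' hj'i hpos hzero
    have h1 : r i ≤ r j := hr j i hji
    have h2 : r j ≤ r i := hmin i le_rfl
    have : r j = r j' := by omega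
    refine ⟨⟨hd, hpos⟩, hji, ?_⟩
    rw [show (r j : ℚ) = (r j' : ℚ) by exact_mod_cast this]
    exact hzero
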